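/- arXiv:2402.03148 — 3 statements merged into one kernel-verified Lean document; each statement's English description precedes it below -/
import Mathlib

section
/- In every DSₙᵏ-model satisfying the limited-choice condition (C3) with parameter k ≥ 1, the APC formula ◇[i]φ₀ ∧ ◇[i]φ₁ ∧ … ∧ ◇[i]φₖ → ⋁_{0 ≤ m < j ≤ k} ◇([i]φₘ ∧ ⟨i⟩φⱼ) is valid for each agent i; i.e., among any k+1 realizable i-choices, two of them overlap. -/
structure DSModel (Agent : Type) (World : Type) where
  nonempty : Nonempty World
  R : Agent → World → World → Prop
  equiv : ∀ i, Equivalence (R i)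
  I : Agent → Set World
  I_nonempty : ∀ i, (I i).Nonempty
  I_closed : ∀ i w v, w ∈ I i → R i w v → v ∈ I i

/-- The APC formula: in a model satisfying limited choice (C3) with parameter k ≥ 1,
◇[i]φ₀ ∧ … ∧ ◇[i]φₖ → ⋁_{m<j} ◇([i]φₘ ∧ ⟨i⟩φⱼ) is valid. -/
theorem apc_valid {Agent World : Type} (M : DSModel Agent World)
    (k : ℕ) (hk : 1 ≤ k) (i : Agent)
    (C3 : ∀ w : Fin (k + 1) → World, ∃ m j : Fin (k + 1), m < j ∧ M.R i (w m) (w j))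
    (φ : Fin (k + 1) → World → Prop) (w : World)
    (h : ∀ m : Fin (k + 1), ∃ u : World, ∀ v, M.R i u v → φ m v) :
    ∃ m j : Fin (k + 1), m < j ∧
      ∃ u : World, (∀ v, M.R i u v → φ m v) ∧ (∃ v, M.R i u v ∧ φ j v) := by
  choose u hu using h
  obtain ⟨m, j, hmj, hR⟩ := C3 u
  exact ⟨m, j, hmj, u m, hu m, u j, hR, hu j (u j) ((M.equiv i).refl _)⟩
end

section
/- The duty-checking formula (⊗n ∧ ◇[y]¬n ∧ ◇[y]f ∧ □(f → n)) → ⊗f is NOT valid over single-agent DS-models: there exists a single-agent DS-model and world falsifying it. A counter-model is the four-world model W = {w,u,v,z} with R the identity relation, I = {z}, V(n) = {w,v,z}, V(f) = {v}. -/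
/-- The duty-checking formula (⊗n ∧ ◇[y]¬n ∧ ◇[y]f ∧ □(f → n)) → ⊗f is NOT valid:
there is a single-agent DS-model and world falsifying it. -/
theorem duty_checking_not_valid :
    ∃ (World : Type) (M : DSModel Unit World) (n f : World → Prop) (w : World),
      (∀ u ∈ M.I (), n u) ∧
      (∃ u : World, ∀ v, M.R () u v → ¬ n v) ∧
      (∃ u : World, ∀ v, M.R () u v → f v) ∧
      (∀ u : World, f u → n u) ∧
      ¬ (∀ u ∈ M.I (), f u) := by
  refine ⟨Fin 4,
    { nonempty := ⟨0⟩
      R := fun _ a b => a = b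
      equiv := fun _ => ⟨fun _ => rfl, Eq.symm, Eq.trans⟩
      I := fun _ => {3}
      I_nonempty := fun _ => ⟨3, rfl⟩
      I_closed := fun _ w v hw h => h ▸ hw },
    fun u => u ≠ 1, fun u => u = 2, 0, ?_, ⟨1, ?_⟩, ⟨2, ?_⟩, ?_, ?_⟩ <;> simp <;> decide
end

section
/- The joint-fulfillment formula (⊗n ∧ ⊗p ∧ □([y]p → ¬[y]n)) → ⊥ is valid over all single-agent DS-models: if it is settled that agent y's choosing to see to p precludes choosing to see to n, then agent y cannot be obliged to both n and p. -/
/-- Joint fulfillment: (⊗n ∧ ⊗p ∧ □([y]p → ¬[y]n)) → ⊥ is valid over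
single-agent DS-models. -/
theorem joint_fulfillment {World : Type}
    (M : DSModel Unit World) (n p : World → Prop) (w : World)
    (hn : ∀ u ∈ M.I (), n u) (hp : ∀ u ∈ M.I (), p u)
    (hbox : ∀ u : World, (∀ v, M.R () u v → p v) → ¬ (∀ v, M.R () u v → n v)) :
    False := by
  obtain ⟨u, hu⟩ := M.I_nonempty ()
  exact hbox u (fun v hv => hp v (M.I_closed () u v hu hv))
    (fun v hv => hn v (M.I_closed () u v hu hv))
end
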